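/- arXiv:1210.5088 — 2 statements merged into one kernel-verified Lean document; each statement's English description precedes it below -/
import Mathlib

section
/- Let d ≥ 1 and T > 0. Suppose v : ℝ^d × [0,T] → ℝ^d and p, φ, μ : ℝ^d × [0,T] → ℝ are smooth, supported for every t in a fixed compact set K ⊂ ℝ^d, and satisfy pointwise on ℝ^d × (0,T) the system ρ(φ)∂ₜv + ((ρ(φ)v + ρ′ j)·∇)v − div(2η(φ)Dv) + ∇p = μ∇φ, ∂ₜφ + ⟨v,∇φ⟩ − div(M(φ)∇μ) = 0, μ = −Δφ + F′(φ), div v = 0, where j := −M(φ)∇μ. Then the energy identity holds: (1/2)∫_{ℝ^d} ρ(φ(·,T))|v(·,T)|² + (1/2)∫_{ℝ^d} |∇φ(·,T)|² + ∫_{ℝ^d} F(φ(·,T)) + ∫₀^T∫_{ℝ^d} M(φ)|∇μ|² + ∫₀^T∫_{ℝ^d} 2η(φ)|Dv|² = (1/2)∫_{ℝ^d} ρ(φ(·,0))|v(·,0)|² + (1/2)∫_{ℝ^d} |∇φ(·,0)|² + ∫_{ℝ^d} F(φ(·,0)). -/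
open MeasureTheory Set Matrix

noncomputable section

/-- Euclidean dot product on `Fin d → ℝ`. -/
def dot {d : ℕ} (a b : Fin d → ℝ) : ℝ := ∑ i, a i * b i

/-- Spatial gradient of a scalar field. -/
def grad {d : ℕ} (f : (Fin d → ℝ) → ℝ) (x : Fin d → ℝ) : Fin d → ℝ :=
  fun i => fderiv ℝ f x (Pi.single i 1)

/-- Jacobian matrix `(∇v)_{ij} = ∂v_i/∂x_j` of a vector field. -/
def jac {d : ℕ} (v : (Fin d → ℝ) → Fin d → ℝ) (x : Fin d → ℝ) :
    Matrix (Fin d) (Fin d) ℝ := Matrix.of fun i j => fderiv ℝ v x (Pi.single j 1) i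

/-- Divergence `div v = tr(∇v)` of a vector field. -/
def divg {d : ℕ} (v : (Fin d → ℝ) → Fin d → ℝ) (x : Fin d → ℝ) : ℝ :=
  ∑ i, fderiv ℝ v x (Pi.single i 1) i

/-- Symmetrized gradient `Dv = (∇v + (∇v)ᵀ)/2`. -/
def symGrad {d : ℕ} (v : (Fin d → ℝ) → Fin d → ℝ) (x : Fin d → ℝ) :
    Matrix (Fin d) (Fin d) ℝ :=
  Matrix.of fun i j => (jac v x i j + jac v x j i) / 2

/-- Frobenius inner product of matrices. -/
def frob {d : ℕ} (A B : Matrix (Fin d) (Fin d) ℝ) : ℝ := ∑ i, ∑ j, A i j * B i j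

/-- Laplacian of a scalar field. -/
def lap {d : ℕ} (f : (Fin d → ℝ) → ℝ) (x : Fin d → ℝ) : ℝ :=
  ∑ i, fderiv ℝ (fun y => fderiv ℝ f y (Pi.single i 1)) x (Pi.single i 1)

/-- Affine mass density `ρ(s) = (ρ̂₂+ρ̂₁)/2 + (ρ̂₂-ρ̂₁)/2 · s`. -/
def rhoAff (ρ₁ ρ₂ s : ℝ) : ℝ := (ρ₂ + ρ₁) / 2 + (ρ₂ - ρ₁) / 2 * s

/-!
The identity is the time integral of a pointwise balance law. For the energy density
`e = ρ(φ)|v|²/2 + |∇φ|²/2 + F(φ)` the four equations give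
`∂ₜe + M(φ)|∇μ|² + 2η(φ)|Dv|² = div G` with the explicit flux
`G = 2η(φ) Dv v - p v - (|v|²/2)(ρ(φ)v + ρ′j) + ∂ₜφ ∇φ - μ j`.
Two cancellations make this work: since `ρ` is affine, `div(ρ(φ)v + ρ′j) = -ρ′∂ₜφ` by the
phase-field equation and `div v = 0`, which absorbs the term `ρ′∂ₜφ|v|²/2` of `∂ₜe`; and since `Dv`
is symmetric, `2η(φ)Dv : ∇v = 2η(φ)|Dv|²`. As `G` has compact support, `∫ div G = 0`, and
integrating `∂ₜe` over `[0, T] × ℝ^d` by Fubini and the fundamental theorem of calculus in `t`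
gives the identity.
-/

open Function Topology
open scoped ContDiff

section Slices
variable {E F : Type*} [NormedAddCommGroup E] [NormedSpace ℝ E] [NormedAddCommGroup F]
  [NormedSpace ℝ F] {u : ℝ → E → F} {t : ℝ} {x : E} {m n : WithTop ℕ∞}

lemma hasDerivAt_fst_slice (hu : DifferentiableAt ℝ (uncurry u) (t, x)) :
    HasDerivAt (fun s => u s x) (fderiv ℝ (uncurry u) (t, x) (1, 0)) t := by
  convert hu.hasFDerivAt.comp_hasDerivAt t ((hasDerivAt_id t).prodMk (hasDerivAt_const t x))
  simp

lemma deriv_fst_slice (hu : DifferentiableAt ℝ (uncurry u) (t, x)) :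
    deriv (fun s => u s x) t = fderiv ℝ (uncurry u) (t, x) (1, 0) :=
  (hasDerivAt_fst_slice hu).deriv

lemma fderiv_snd_slice_apply (hu : DifferentiableAt ℝ (uncurry u) (t, x)) (h : E) :
    fderiv ℝ (u t) x h = fderiv ℝ (uncurry u) (t, x) (0, h) := by
  have := hu.hasFDerivAt.comp x (hasFDerivAt_prodMk_right t x)
  rw [show u t = uncurry u ∘ fun y => (t, y) from rfl, this.fderiv]
  simp

lemma ContDiff.uncurry_left (hu : ContDiff ℝ n (uncurry u)) (t : ℝ) : ContDiff ℝ n (u t) :=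
  hu.comp (contDiff_const.prodMk contDiff_id)

lemma ContDiff.uncurry_fderiv_snd_slice (hu : ContDiff ℝ n (uncurry u)) (hmn : m + 1 ≤ n)
    (h : E) : ContDiff ℝ m (uncurry fun t y => fderiv ℝ (u t) y h) :=
  ContDiff.fderiv_apply (f := fun (q : ℝ × E) y => u q.1 y)
    (hu.comp (contDiff_fst.fst.prodMk contDiff_snd)) contDiff_snd contDiff_const hmn

lemma ContDiff.uncurry_deriv_fst_slice (hu : ContDiff ℝ n (uncurry u)) (hmn : m + 1 ≤ n) :
    ContDiff ℝ m (uncurry fun t y => deriv (fun s => u s y) t) :=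
  ContDiff.fderiv_apply (f := fun (q : ℝ × E) s => u s q.2)
    (hu.comp (contDiff_snd.prodMk contDiff_fst.snd)) contDiff_fst contDiff_const hmn

lemma ContDiff.hasDerivAt_fderiv_snd_slice (hu : ContDiff ℝ 2 (uncurry u)) (h : E) :
    HasDerivAt (fun s => fderiv ℝ (u s) x h)
      (fderiv ℝ (fun y => deriv (fun s => u s y) t) x h) t := by
  -- both derivatives are entries of the symmetric second derivative of `uncurry u` at `(t, x)`
  set U := uncurry u
  have hU : Differentiable ℝ U := hu.differentiable two_ne_zero
  have hDU : Differentiable ℝ (fderiv ℝ U) :=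
    (hu.fderiv_right (m := 1) (by norm_num)).differentiable one_ne_zero
  have happly : ∀ c q, HasFDerivAt (fun q => fderiv ℝ U q c)
      ((ContinuousLinearMap.apply ℝ F c).comp (fderiv ℝ (fderiv ℝ U) q)) q := fun c q =>
    (ContinuousLinearMap.apply ℝ F c).hasFDerivAt.comp q (hDU q).hasFDerivAt
  have hsymm := (hu.contDiffAt (x := (t, x))).isSymmSndFDerivAt (by simp)
  have hL : HasDerivAt (fun s => fderiv ℝ U (s, x) (0, h))
      (fderiv ℝ (fderiv ℝ U) (t, x) (1, 0) (0, h)) t := by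
    convert hasDerivAt_fst_slice (u := fun s y => fderiv ℝ U (s, y) (0, h))
      (happly (0, h) (t, x)).differentiableAt using 1
    exact congrArg (· (1, 0)) (happly (0, h) (t, x)).fderiv.symm
  have hR : fderiv ℝ (fun y => fderiv ℝ U (t, y) (1, 0)) x h
      = fderiv ℝ (fderiv ℝ U) (t, x) (0, h) (1, 0) := by
    rw [fderiv_snd_slice_apply (u := fun s y => fderiv ℝ U (s, y) (1, 0))
      (happly (1, 0) (t, x)).differentiableAt]
    exact congrArg (· (0, h)) (happly (1, 0) (t, x)).fderiv
  have e1 : (fun s => fderiv ℝ (u s) x h) = fun s => fderiv ℝ U (s, x) (0, h) :=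
    funext fun s => fderiv_snd_slice_apply (hU _) h
  have e2 : (fun y => deriv (fun s => u s y) t) = fun y => fderiv ℝ U (t, y) (1, 0) :=
    funext fun y => deriv_fst_slice (hU _)
  rw [e1, e2, hR, ← hsymm]
  exact hL

lemma fderiv_eq_zero_of_forall_notMem {f : E → F} {K : Set E} (hK : IsClosed K)
    (h0 : ∀ y ∉ K, f y = 0) (hx : x ∉ K) : fderiv ℝ f x = 0 := by
  have : f =ᶠ[𝓝 x] fun _ => 0 := Filter.eventually_of_mem (hK.isOpen_compl.mem_nhds hx) h0
  rw [this.fderiv_eq, fderiv_const_apply]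

end Slices

section ParametricIntegrals
variable {Y : Type*} [TopologicalSpace Y] [MeasurableSpace Y] [OpensMeasurableSpace Y]
  {μ : Measure Y} [IsLocallyFiniteMeasure μ] {u f g : ℝ → Y → ℝ} {K : Set Y}

lemma continuous_integral_of_forall_notMem (hu : Continuous (uncurry u)) (hK : IsCompact K)
    (h0 : ∀ t, ∀ x ∉ K, u t x = 0) : Continuous fun t => ∫ x, u t x ∂μ := by
  convert continuous_parametric_integral_of_continuous (μ := μ) hu hK using 2 with t
  exact (setIntegral_eq_integral_of_forall_compl_eq_zero (h0 t)).symm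

lemma Continuous.integrable_uncurry_left [R1Space Y] (hu : Continuous (uncurry u))
    (hK : IsCompact K) (h0 : ∀ t, ∀ x ∉ K, u t x = 0) (t : ℝ) : Integrable (u t) μ :=
  (hu.comp (Continuous.prodMk_right t)).integrable_of_hasCompactSupport
    (HasCompactSupport.intro hK (h0 t))

lemma intervalIntegral_integral_add [R1Space Y] (hf : Continuous (uncurry f))
    (hg : Continuous (uncurry g)) (hK : IsCompact K) (hf0 : ∀ t, ∀ x ∉ K, f t x = 0)
    (hg0 : ∀ t, ∀ x ∉ K, g t x = 0) (a b : ℝ) :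
    ∫ t in a..b, ∫ x, (f t x + g t x) ∂μ
      = (∫ t in a..b, ∫ x, f t x ∂μ) + ∫ t in a..b, ∫ x, g t x ∂μ := by
  have cf : Continuous fun t => ∫ x, f t x ∂μ := continuous_integral_of_forall_notMem hf hK hf0
  have cg : Continuous fun t => ∫ x, g t x ∂μ := continuous_integral_of_forall_notMem hg hK hg0
  simp_rw [integral_add (hf.integrable_uncurry_left hK hf0 _) (hg.integrable_uncurry_left hK hg0 _)]
  exact intervalIntegral.integral_add (cf.intervalIntegrable a b) (cg.intervalIntegrable a b)

end ParametricIntegrals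

section IntegralsOfDerivatives
variable {E : Type*} [NormedAddCommGroup E] [NormedSpace ℝ E] [MeasurableSpace E] [BorelSpace E]
  {μ : Measure E} [IsLocallyFiniteMeasure μ] {f : E → ℝ} {u : ℝ → E → ℝ} {K : Set E}

lemma ContDiff.integrable_fderiv_apply (hf : ContDiff ℝ 1 f) (hfc : HasCompactSupport f)
    (h : E) : Integrable (fun x => fderiv ℝ f x h) μ := by
  have : Continuous fun x => fderiv ℝ f x h :=
    (hf.continuous_fderiv one_ne_zero).clm_apply continuous_const
  exact this.integrable_of_hasCompactSupport (hfc.fderiv_apply (𝕜 := ℝ) h)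

lemma integral_fderiv_apply_eq_zero [FiniteDimensional ℝ E] [μ.IsAddHaarMeasure]
    (hf : ContDiff ℝ 1 f) (hfc : HasCompactSupport f) (h : E) : ∫ x, fderiv ℝ f x h ∂μ = 0 := by
  have := integral_mul_fderiv_eq_neg_fderiv_mul_of_integrable (μ := μ) (f := fun _ => (1 : ℝ))
    (g := f) (v := h) (by simp) (by simpa using hf.integrable_fderiv_apply hfc h)
    (by simpa using hf.continuous.integrable_of_hasCompactSupport hfc)
    (fun _ _ => differentiableAt_const _) (fun x _ => hf.differentiable one_ne_zero x)
  simpa using this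

lemma integral_sub_integral_eq_intervalIntegral_deriv [SFinite μ]
    (hu : ContDiff ℝ 1 (uncurry u)) (hK : IsCompact K)
    (h0 : ∀ t, ∀ x ∉ K, u t x = 0) (a b : ℝ) :
    ∫ x, u b x ∂μ - ∫ x, u a x ∂μ = ∫ t in a..b, ∫ x, deriv (fun s => u s x) t ∂μ := by
  have hd : Continuous (uncurry fun t x => deriv (fun s => u s x) t) :=
    (hu.uncurry_deriv_fst_slice (m := 0) (by simp)).continuous
  have hd0 : ∀ t, ∀ x ∉ K, deriv (fun s => u s x) t = 0 := fun t x hx => by simp [h0 _ x hx]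
  have hprod : Integrable (uncurry fun t x => deriv (fun s => u s x) t)
      ((volume.restrict (uIoc a b)).prod μ) := by
    have hK' : IntegrableOn (uncurry fun t x => deriv (fun s => u s x) t) (uIcc a b ×ˢ univ)
        (volume.prod μ) :=
      (hd.continuousOn.integrableOn_compact (isCompact_uIcc.prod hK)).of_forall_sdiff_eq_zero
        (measurableSet_uIcc.prod MeasurableSet.univ) fun q hq => hd0 _ _ fun h => hq.2 ⟨hq.1.1, h⟩
    rw [← Measure.restrict_univ (μ := μ), Measure.prod_restrict]
    exact hK'.mono_set (prod_mono uIoc_subset_uIcc le_rfl)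
  rw [← integral_sub (hu.continuous.integrable_uncurry_left hK h0 b)
    (hu.continuous.integrable_uncurry_left hK h0 a), intervalIntegral_integral_swap hprod]
  congr 1 with x
  refine (intervalIntegral.integral_deriv_eq_sub (f := fun s => u s x) (fun t _ => ?_) ?_).symm
  · exact (hasDerivAt_fst_slice (hu.differentiable one_ne_zero _)).differentiableAt
  · exact (hd.comp (Continuous.prodMk_left x)).intervalIntegrable a b

end IntegralsOfDerivatives

section VectorCalculus
variable {d : ℕ} {x : Fin d → ℝ} {K : Set (Fin d → ℝ)} {m n : WithTop ℕ∞}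

lemma dot_comm (a b : Fin d → ℝ) : dot a b = dot b a := dotProduct_comm a b

lemma dot_neg_right (a b : Fin d → ℝ) : dot a (-b) = -dot a b := dotProduct_neg a b

lemma dot_smul_right (a b : Fin d → ℝ) (c : ℝ) : dot a (c • b) = c * dot a b := by
  simp [dot, Finset.mul_sum, mul_left_comm]

lemma HasDerivAt.dot {a b : ℝ → Fin d → ℝ} {a' b' : Fin d → ℝ} {t : ℝ}
    (ha : HasDerivAt a a' t) (hb : HasDerivAt b b' t) :
    HasDerivAt (fun s => dot (a s) (b s)) (dot a' (b t) + dot (a t) b') t := by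
  have := HasDerivAt.fun_sum (u := Finset.univ) fun i _ =>
    (hasDerivAt_pi.1 ha i).mul (hasDerivAt_pi.1 hb i)
  unfold _root_.dot
  simpa [Finset.sum_add_distrib] using this

lemma fderiv_apply_eq_fderiv_coord {w : (Fin d → ℝ) → Fin d → ℝ} (hw : DifferentiableAt ℝ w x)
    (h : Fin d → ℝ) (i : Fin d) : fderiv ℝ w x h i = fderiv ℝ (fun y => w y i) x h := by
  rw [fderiv_pi fun i => differentiableAt_pi.1 hw i]; rfl

lemma jac_apply_eq_grad {w : (Fin d → ℝ) → Fin d → ℝ} (hw : DifferentiableAt ℝ w x) (i k : Fin d) :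
    jac w x i k = grad (fun y => w y i) x k :=
  fderiv_apply_eq_fderiv_coord hw _ i

lemma divg_eq_sum_grad {w : (Fin d → ℝ) → Fin d → ℝ} (hw : DifferentiableAt ℝ w x) :
    divg w x = ∑ k, grad (fun y => w y k) x k :=
  Finset.sum_congr rfl fun k _ => fderiv_apply_eq_fderiv_coord hw _ k

lemma divg_grad {f : (Fin d → ℝ) → ℝ} (hf : DifferentiableAt ℝ (grad f) x) :
    divg (grad f) x = lap f x :=
  divg_eq_sum_grad hf

lemma divg_add {w W : (Fin d → ℝ) → Fin d → ℝ} (hw : DifferentiableAt ℝ w x)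
    (hW : DifferentiableAt ℝ W x) : divg (fun y => w y + W y) x = divg w x + divg W x := by
  simp [divg, fderiv_fun_add hw hW, Finset.sum_add_distrib]

lemma divg_sub {w W : (Fin d → ℝ) → Fin d → ℝ} (hw : DifferentiableAt ℝ w x)
    (hW : DifferentiableAt ℝ W x) : divg (fun y => w y - W y) x = divg w x - divg W x := by
  simp [divg, fderiv_fun_sub hw hW, Finset.sum_sub_distrib]

lemma divg_neg {w : (Fin d → ℝ) → Fin d → ℝ} :
    divg (fun y => -w y) x = -divg w x := by
  simp [divg, fderiv_fun_neg]

lemma divg_sum {ι : Type*} (s : Finset ι) {w : ι → (Fin d → ℝ) → Fin d → ℝ}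
    (hw : ∀ i ∈ s, DifferentiableAt ℝ (w i) x) :
    divg (fun y => ∑ i ∈ s, w i y) x = ∑ i ∈ s, divg (w i) x := by
  simp [divg, fderiv_fun_sum hw, Finset.sum_comm (s := s)]

lemma divg_smul {f : (Fin d → ℝ) → ℝ} {w : (Fin d → ℝ) → Fin d → ℝ} (hf : DifferentiableAt ℝ f x)
    (hw : DifferentiableAt ℝ w x) :
    divg (fun y => f y • w y) x = dot (grad f x) (w x) + f x * divg w x := by
  simp [divg, dot, grad, fderiv_fun_smul hf hw, Finset.sum_add_distrib, Finset.mul_sum, add_comm]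

lemma divg_const_smul {w : (Fin d → ℝ) → Fin d → ℝ} (hw : DifferentiableAt ℝ w x) (c : ℝ) :
    divg (fun y => c • w y) x = c * divg w x := by
  simp [divg, fderiv_fun_const_smul hw, Finset.mul_sum]

lemma grad_comp {F : ℝ → ℝ} {f : (Fin d → ℝ) → ℝ} (hF : DifferentiableAt ℝ F (f x))
    (hf : DifferentiableAt ℝ f x) : grad (fun y => F (f y)) x = deriv F (f x) • grad f x := by
  ext k
  simp [grad, fderiv_fun_comp x hF hf, mul_comm]

lemma grad_half_dot_self {w : (Fin d → ℝ) → Fin d → ℝ} (hw : DifferentiableAt ℝ w x) :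
    grad (fun y => dot (w y) (w y) / 2) x = w x ᵥ* jac w x := by
  have hfd : ∀ i, DifferentiableAt ℝ (fun y => w y i) x := differentiableAt_pi.1 hw
  ext k
  simp only [grad, dot, div_eq_mul_inv]
  rw [fderiv_mul_const (by fun_prop),
    fderiv_fun_sum (A := fun i y => w y i * w y i) fun i _ => (hfd i).fun_mul (hfd i)]
  simp [fderiv_fun_mul (hfd _) (hfd _), vecMul, dotProduct, jac_apply_eq_grad hw, grad,
    Finset.mul_sum]
  exact Finset.sum_congr rfl fun i _ => by ring

lemma symGrad_apply_comm (w : (Fin d → ℝ) → Fin d → ℝ) (i k : Fin d) :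
    symGrad w x i k = symGrad w x k i := by
  simp only [symGrad, of_apply, add_comm]

lemma frob_jac_symGrad (w : (Fin d → ℝ) → Fin d → ℝ) :
    frob (jac w x) (symGrad w x) = frob (symGrad w x) (symGrad w x) := by
  have hswap : ∑ i, ∑ k, jac w x k i * symGrad w x i k = frob (jac w x) (symGrad w x) := by
    rw [Finset.sum_comm]; simp only [frob, symGrad_apply_comm w]
  calc frob (jac w x) (symGrad w x)
      = (frob (jac w x) (symGrad w x) + ∑ i, ∑ k, jac w x k i * symGrad w x i k) / 2 := by
        rw [hswap]; ring
    _ = frob (symGrad w x) (symGrad w x) := by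
        simp only [frob, ← Finset.sum_add_distrib, Finset.sum_div]
        refine Finset.sum_congr rfl fun i _ => Finset.sum_congr rfl fun k _ => ?_
        simp only [symGrad, of_apply]; ring

lemma divg_sum_smul_symGrad {w : (Fin d → ℝ) → Fin d → ℝ} {c : (Fin d → ℝ) → ℝ}
    (hw : DifferentiableAt ℝ w x) (hS : ∀ i, DifferentiableAt ℝ (fun y => c y • symGrad w y i) x) :
    divg (fun y => ∑ i, w y i • (c y • symGrad w y i)) x
      = c x * frob (symGrad w x) (symGrad w x)
        + dot (w x) (fun i => divg (fun y => c y • symGrad w y i) x) := by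
  have hwi : ∀ i, DifferentiableAt ℝ (fun y => w y i) x := differentiableAt_pi.1 hw
  rw [divg_sum _ fun i _ => (hwi i).fun_smul (hS i)]
  simp only [divg_smul (hwi _) (hS _), Finset.sum_add_distrib, ← frob_jac_symGrad]
  congr 1
  simp only [frob, dot, jac_apply_eq_grad hw, Pi.smul_apply, smul_eq_mul, Finset.mul_sum]
  exact Finset.sum_congr rfl fun i _ => Finset.sum_congr rfl fun k _ => by ring

lemma divg_half_dot_self_smul {w b : (Fin d → ℝ) → Fin d → ℝ} (hw : DifferentiableAt ℝ w x)
    (hb : DifferentiableAt ℝ b x) :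
    divg (fun y => (dot (w y) (w y) / 2) • b y) x
      = dot (w x) (jac w x *ᵥ b x) + dot (w x) (w x) / 2 * divg b x := by
  have hq : DifferentiableAt ℝ (fun y => dot (w y) (w y) / 2) x := by
    unfold dot; fun_prop
  rw [divg_smul hq hb, grad_half_dot_self hw]
  exact congrArg (· + _) (dotProduct_mulVec _ _ _).symm

lemma grad_eq_zero_of_forall_notMem (hK : IsClosed K) {f : (Fin d → ℝ) → ℝ}
    (h0 : ∀ y ∉ K, f y = 0) (hx : x ∉ K) : grad f x = 0 := by
  ext k
  simp [grad, fderiv_eq_zero_of_forall_notMem hK h0 hx]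

lemma symGrad_eq_zero_of_forall_notMem (hK : IsClosed K) {w : (Fin d → ℝ) → Fin d → ℝ}
    (h0 : ∀ y ∉ K, w y = 0) (hx : x ∉ K) : symGrad w x = 0 := by
  ext i k
  simp [symGrad, jac, fderiv_eq_zero_of_forall_notMem hK h0 hx]

lemma ContDiff.integrable_divg {w : (Fin d → ℝ) → Fin d → ℝ} (hw : ContDiff ℝ 1 w)
    (hwc : HasCompactSupport w) : Integrable (divg w) := by
  have hwk : ∀ k, ContDiff ℝ 1 fun y => w y k := fun k => contDiff_pi.1 hw k
  have hwkc : ∀ k, HasCompactSupport fun y => w y k := fun k =>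
    hwc.comp_left (g := fun v : Fin d → ℝ => v k) rfl
  rw [show divg w = fun x => ∑ k, grad (fun y => w y k) x k from
    funext fun x => divg_eq_sum_grad (hw.differentiable one_ne_zero x)]
  exact integrable_finsetSum _ fun k _ => (hwk k).integrable_fderiv_apply (hwkc k) _

lemma integral_divg_eq_zero {w : (Fin d → ℝ) → Fin d → ℝ} (hw : ContDiff ℝ 1 w)
    (hwc : HasCompactSupport w) : ∫ x, divg w x = 0 := by
  have hwk : ∀ k, ContDiff ℝ 1 fun y => w y k := fun k => contDiff_pi.1 hw k
  have hwkc : ∀ k, HasCompactSupport fun y => w y k := fun k =>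
    hwc.comp_left (g := fun v : Fin d → ℝ => v k) rfl
  simp_rw [divg_eq_sum_grad (hw.differentiable one_ne_zero _)]
  simp only [grad]
  rw [integral_finsetSum _ fun k _ => (hwk k).integrable_fderiv_apply (hwkc k) (Pi.single k 1)]
  exact Finset.sum_eq_zero fun k _ => integral_fderiv_apply_eq_zero (hwk k) (hwkc k) _

lemma ContDiff.uncurry_grad {u : ℝ → (Fin d → ℝ) → ℝ} (hu : ContDiff ℝ n (uncurry u))
    (hmn : m + 1 ≤ n) : ContDiff ℝ m (uncurry fun t => grad (u t)) :=
  contDiff_pi.2 fun k => hu.uncurry_fderiv_snd_slice hmn (Pi.single k 1)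

lemma ContDiff.uncurry_symGrad_apply {v : ℝ → (Fin d → ℝ) → Fin d → ℝ}
    (hv : ContDiff ℝ n (uncurry v)) (hmn : m + 1 ≤ n) (i : Fin d) :
    ContDiff ℝ m (uncurry fun t y => symGrad (v t) y i) := by
  show ContDiff ℝ m fun q : ℝ × (Fin d → ℝ) => symGrad (v q.1) q.2 i
  refine contDiff_pi.2 fun k => ?_
  simp only [symGrad, jac, of_apply]
  fun_prop

end VectorCalculus

lemma hasDerivAt_rhoAff (ρ₁ ρ₂ s : ℝ) : HasDerivAt (rhoAff ρ₁ ρ₂) ((ρ₂ - ρ₁) / 2) s := by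
  unfold rhoAff
  simpa using ((hasDerivAt_id s).const_mul ((ρ₂ - ρ₁) / 2)).const_add ((ρ₂ + ρ₁) / 2)

section Model
variable {d : ℕ} (ρ₁ ρ₂ : ℝ) (M η F : ℝ → ℝ) (v : ℝ → (Fin d → ℝ) → Fin d → ℝ)
  (p φ μ : ℝ → (Fin d → ℝ) → ℝ)

def energyDensity (t : ℝ) (x : Fin d → ℝ) : ℝ :=
  rhoAff ρ₁ ρ₂ (φ t x) * dot (v t x) (v t x) / 2 + dot (grad (φ t) x) (grad (φ t) x) / 2
    + F (φ t x)

def dissipationDensity (t : ℝ) (x : Fin d → ℝ) : ℝ :=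
  M (φ t x) * dot (grad (μ t) x) (grad (μ t) x)
    + 2 * η (φ t x) * frob (symGrad (v t) x) (symGrad (v t) x)

def diffusionFlux (t : ℝ) (x : Fin d → ℝ) : Fin d → ℝ := -(M (φ t x) • grad (μ t) x)

def massFlux (t : ℝ) (x : Fin d → ℝ) : Fin d → ℝ :=
  rhoAff ρ₁ ρ₂ (φ t x) • v t x + ((ρ₂ - ρ₁) / 2) • diffusionFlux M φ μ t x

def energyFlux (t : ℝ) (x : Fin d → ℝ) : Fin d → ℝ :=
  ∑ i, v t x i • ((2 * η (φ t x)) • symGrad (v t) x i) - p t x • v t x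
    - (dot (v t x) (v t x) / 2) • massFlux ρ₁ ρ₂ M v φ μ t x
    + deriv (fun s => φ s x) t • grad (φ t) x - μ t x • diffusionFlux M φ μ t x

structure IsStrongSolutionAt (t : ℝ) : Prop where
  momentum : ∀ x i, rhoAff ρ₁ ρ₂ (φ t x) * deriv (fun s => v s x i) t
      + ∑ k, massFlux ρ₁ ρ₂ M v φ μ t x k * jac (v t) x i k
      - ∑ k, fderiv ℝ (fun y => 2 * η (φ t y) * symGrad (v t) y i k) x (Pi.single k 1)
      + grad (p t) x i = μ t x * grad (φ t) x i
  phaseField : ∀ x, deriv (fun s => φ s x) t + dot (v t x) (grad (φ t) x)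
      - ∑ k, fderiv ℝ (fun y => M (φ t y) * grad (μ t) y k) x (Pi.single k 1) = 0
  chemicalPotential : ∀ x, μ t x = -lap (φ t) x + deriv F (φ t x)
  incompressible : ∀ x, divg (v t) x = 0

variable {ρ₁ ρ₂ M η F v p φ μ} {K : Set (Fin d → ℝ)} {t : ℝ} {x : Fin d → ℝ}

lemma contDiff_energyDensity (hF : ContDiff ℝ ∞ F)
    (hv : ContDiff ℝ ∞ fun q : ℝ × (Fin d → ℝ) => v q.1 q.2)
    (hφ : ContDiff ℝ ∞ fun q : ℝ × (Fin d → ℝ) => φ q.1 q.2) :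
    ContDiff ℝ ∞ fun q : ℝ × (Fin d → ℝ) => energyDensity ρ₁ ρ₂ F v φ q.1 q.2 := by
  have cgφ : ContDiff ℝ ∞ fun q : ℝ × (Fin d → ℝ) => grad (φ q.1) q.2 := hφ.uncurry_grad (by simp)
  unfold energyDensity rhoAff dot
  fun_prop

lemma contDiff_dissipationDensity (hM : ContDiff ℝ ∞ M) (hη : ContDiff ℝ ∞ η)
    (hv : ContDiff ℝ ∞ fun q : ℝ × (Fin d → ℝ) => v q.1 q.2)
    (hφ : ContDiff ℝ ∞ fun q : ℝ × (Fin d → ℝ) => φ q.1 q.2)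
    (hμ : ContDiff ℝ ∞ fun q : ℝ × (Fin d → ℝ) => μ q.1 q.2) :
    ContDiff ℝ ∞ fun q : ℝ × (Fin d → ℝ) => dissipationDensity M η v φ μ q.1 q.2 := by
  have cgμ : ContDiff ℝ ∞ fun q : ℝ × (Fin d → ℝ) => grad (μ q.1) q.2 := hμ.uncurry_grad (by simp)
  have cS : ∀ i, ContDiff ℝ ∞ fun q : ℝ × (Fin d → ℝ) => symGrad (v q.1) q.2 i := fun i =>
    hv.uncurry_symGrad_apply (by simp) i
  unfold dissipationDensity dot frob
  fun_prop

lemma contDiff_energyFlux (hM : ContDiff ℝ ∞ M) (hη : ContDiff ℝ ∞ η)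
    (hv : ContDiff ℝ ∞ fun q : ℝ × (Fin d → ℝ) => v q.1 q.2)
    (hp : ContDiff ℝ ∞ fun q : ℝ × (Fin d → ℝ) => p q.1 q.2)
    (hφ : ContDiff ℝ ∞ fun q : ℝ × (Fin d → ℝ) => φ q.1 q.2)
    (hμ : ContDiff ℝ ∞ fun q : ℝ × (Fin d → ℝ) => μ q.1 q.2) :
    ContDiff ℝ ∞ fun q : ℝ × (Fin d → ℝ) => energyFlux ρ₁ ρ₂ M η v p φ μ q.1 q.2 := by
  have cgφ : ContDiff ℝ ∞ fun q : ℝ × (Fin d → ℝ) => grad (φ q.1) q.2 := hφ.uncurry_grad (by simp)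
  have cgμ : ContDiff ℝ ∞ fun q : ℝ × (Fin d → ℝ) => grad (μ q.1) q.2 := hμ.uncurry_grad (by simp)
  have cφt : ContDiff ℝ ∞ fun q : ℝ × (Fin d → ℝ) => deriv (fun s => φ s q.2) q.1 :=
    hφ.uncurry_deriv_fst_slice (by simp)
  have cS : ∀ i, ContDiff ℝ ∞ fun q : ℝ × (Fin d → ℝ) => symGrad (v q.1) q.2 i := fun i =>
    hv.uncurry_symGrad_apply (by simp) i
  unfold energyFlux massFlux diffusionFlux rhoAff dot
  fun_prop

lemma energyDensity_eq_zero (hF0 : F 0 = 0) (hK : IsClosed K) (hv0 : ∀ y ∉ K, v t y = 0)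
    (hφ0 : ∀ y ∉ K, φ t y = 0) (hx : x ∉ K) : energyDensity ρ₁ ρ₂ F v φ t x = 0 := by
  simp [energyDensity, dot, hv0 x hx, hφ0 x hx, grad_eq_zero_of_forall_notMem hK hφ0 hx, hF0]

lemma dissipationDensity_eq_zero (hK : IsClosed K) (hv0 : ∀ y ∉ K, v t y = 0)
    (hμ0 : ∀ y ∉ K, μ t y = 0) (hx : x ∉ K) : dissipationDensity M η v φ μ t x = 0 := by
  simp [dissipationDensity, dot, frob, grad_eq_zero_of_forall_notMem hK hμ0 hx,
    symGrad_eq_zero_of_forall_notMem hK hv0 hx]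

lemma energyFlux_eq_zero (hK : IsClosed K) (hv0 : ∀ y ∉ K, v t y = 0)
    (hp0 : ∀ y ∉ K, p t y = 0) (hφ0 : ∀ y ∉ K, φ t y = 0) (hμ0 : ∀ y ∉ K, μ t y = 0)
    (hx : x ∉ K) : energyFlux ρ₁ ρ₂ M η v p φ μ t x = 0 := by
  simp [energyFlux, dot, hv0 x hx, hp0 x hx, hμ0 x hx, grad_eq_zero_of_forall_notMem hK hφ0 hx]

lemma hasDerivAt_energyDensity (hF : Differentiable ℝ F)
    (hv : ContDiff ℝ ∞ fun q : ℝ × (Fin d → ℝ) => v q.1 q.2)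
    (hφ : ContDiff ℝ ∞ fun q : ℝ × (Fin d → ℝ) => φ q.1 q.2) :
    HasDerivAt (fun s => energyDensity ρ₁ ρ₂ F v φ s x)
      ((ρ₂ - ρ₁) / 2 * deriv (fun s => φ s x) t * dot (v t x) (v t x) / 2
        + rhoAff ρ₁ ρ₂ (φ t x) * dot (v t x) (fun i => deriv (fun s => v s x i) t)
        + dot (grad (φ t) x) (grad (fun y => deriv (fun s => φ s y) t) x)
        + deriv F (φ t x) * deriv (fun s => φ s x) t) t := by
  have hφt : HasDerivAt (fun s => φ s x) (deriv (fun s => φ s x) t) t :=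
    (hasDerivAt_fst_slice (hφ.differentiable (by simp) _)).differentiableAt.hasDerivAt
  have hvt : HasDerivAt (fun s => v s x) (fun i => deriv (fun s => v s x i) t) t :=
    hasDerivAt_pi.2 fun i => (hasDerivAt_fst_slice (u := fun s y => v s y i)
      ((contDiff_pi.1 hv i).differentiable (by simp) _)).differentiableAt.hasDerivAt
  have hgt : HasDerivAt (fun s => grad (φ s) x) (grad (fun y => deriv (fun s => φ s y) t) x) t :=
    hasDerivAt_pi.2 fun k => (hφ.of_le (by norm_cast)).hasDerivAt_fderiv_snd_slice _
  refine (((((hasDerivAt_rhoAff ρ₁ ρ₂ _).comp t hφt).mul (hvt.dot hvt)).div_const 2).add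
    ((hgt.dot hgt).div_const 2) |>.add ((hF _).hasDerivAt.comp t hφt)).congr_deriv ?_
  rw [Function.comp_apply, dot_comm (fun i => deriv (fun s => v s x i) t),
    dot_comm (grad (fun y => deriv (fun s => φ s y) t) x)]
  ring

lemma divg_massFlux (hφ : DifferentiableAt ℝ (φ t) x)
    (hv : DifferentiableAt ℝ (v t) x) (hj : DifferentiableAt ℝ (diffusionFlux M φ μ t) x) :
    divg (massFlux ρ₁ ρ₂ M v φ μ t) x
      = (ρ₂ - ρ₁) / 2 * dot (grad (φ t) x) (v t x) + rhoAff ρ₁ ρ₂ (φ t x) * divg (v t) x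
        + (ρ₂ - ρ₁) / 2 * divg (diffusionFlux M φ μ t) x := by
  have hρ : DifferentiableAt ℝ (fun y => rhoAff ρ₁ ρ₂ (φ t y)) x :=
    (hasDerivAt_rhoAff ρ₁ ρ₂ _).differentiableAt.comp x hφ
  have hj' : DifferentiableAt ℝ (fun y => ((ρ₂ - ρ₁) / 2) • diffusionFlux M φ μ t y) x :=
    hj.fun_const_smul _
  unfold massFlux
  rw [divg_add (hρ.fun_smul hv) hj', divg_smul hρ hv,
    grad_comp (hasDerivAt_rhoAff ρ₁ ρ₂ _).differentiableAt hφ, (hasDerivAt_rhoAff ρ₁ ρ₂ _).deriv,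
    divg_const_smul hj, dot_comm, dot_smul_right, dot_comm]

lemma divg_diffusionFlux
    (hj : DifferentiableAt ℝ (fun y => M (φ t y) • grad (μ t) y) x) :
    divg (diffusionFlux M φ μ t) x
      = -∑ k, fderiv ℝ (fun y => M (φ t y) * grad (μ t) y k) x (Pi.single k 1) := by
  unfold diffusionFlux
  rw [divg_neg, divg_eq_sum_grad hj]
  rfl

lemma divg_energyFlux (hM : ContDiff ℝ ∞ M) (hη : ContDiff ℝ ∞ η)
    (hv : ContDiff ℝ ∞ fun q : ℝ × (Fin d → ℝ) => v q.1 q.2)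
    (hp : ContDiff ℝ ∞ fun q : ℝ × (Fin d → ℝ) => p q.1 q.2)
    (hφ : ContDiff ℝ ∞ fun q : ℝ × (Fin d → ℝ) => φ q.1 q.2)
    (hμ : ContDiff ℝ ∞ fun q : ℝ × (Fin d → ℝ) => μ q.1 q.2) :
    divg (energyFlux ρ₁ ρ₂ M η v p φ μ t) x
      = 2 * η (φ t x) * frob (symGrad (v t) x) (symGrad (v t) x)
        + dot (v t x) (fun i =>
            ∑ k, fderiv ℝ (fun y => 2 * η (φ t y) * symGrad (v t) y i k) x (Pi.single k 1))
        - (dot (grad (p t) x) (v t x) + p t x * divg (v t) x)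
        - (dot (v t x) (jac (v t) x *ᵥ massFlux ρ₁ ρ₂ M v φ μ t x)
          + dot (v t x) (v t x) / 2 * ((ρ₂ - ρ₁) / 2 * dot (grad (φ t) x) (v t x)
            + rhoAff ρ₁ ρ₂ (φ t x) * divg (v t) x
            - (ρ₂ - ρ₁) / 2
              * ∑ k, fderiv ℝ (fun y => M (φ t y) * grad (μ t) y k) x (Pi.single k 1)))
        + (dot (grad (fun y => deriv (fun s => φ s y) t) x) (grad (φ t) x)
          + deriv (fun s => φ s x) t * lap (φ t) x)
        + (M (φ t x) * dot (grad (μ t) x) (grad (μ t) x)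
          + μ t x * ∑ k, fderiv ℝ (fun y => M (φ t y) * grad (μ t) y k) x (Pi.single k 1)) := by
  have cv : ContDiff ℝ ∞ (v t) := hv.uncurry_left t
  have cp : ContDiff ℝ ∞ (p t) := hp.uncurry_left t
  have cφ : ContDiff ℝ ∞ (φ t) := hφ.uncurry_left t
  have cμ : ContDiff ℝ ∞ (μ t) := hμ.uncurry_left t
  have cgφ : ContDiff ℝ ∞ (grad (φ t)) := (hφ.uncurry_grad (by simp)).uncurry_left t
  have cgμ : ContDiff ℝ ∞ (grad (μ t)) := (hμ.uncurry_grad (by simp)).uncurry_left t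
  have cφt : ContDiff ℝ ∞ fun y => deriv (fun s => φ s y) t :=
    (hφ.uncurry_deriv_fst_slice (by simp)).uncurry_left t
  have cσ : ∀ i, ContDiff ℝ ∞ fun y => (2 * η (φ t y)) • symGrad (v t) y i := fun i => by
    have : ContDiff ℝ ∞ fun y => symGrad (v t) y i :=
      (hv.uncurry_symGrad_apply (by simp) i).uncurry_left t
    fun_prop
  have D : ∀ {w : (Fin d → ℝ) → Fin d → ℝ}, ContDiff ℝ ∞ w → DifferentiableAt ℝ w x :=
    fun hw => hw.differentiable (by simp) x
  have D' : ∀ {f : (Fin d → ℝ) → ℝ}, ContDiff ℝ ∞ f → DifferentiableAt ℝ f x :=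
    fun hf => hf.differentiable (by simp) x
  have hσv : ContDiff ℝ ∞ fun y => ∑ i, v t y i • ((2 * η (φ t y)) • symGrad (v t) y i) := by
    fun_prop
  have cj : ContDiff ℝ ∞ (diffusionFlux M φ μ t) := by unfold diffusionFlux; fun_prop
  have cb : ContDiff ℝ ∞ (massFlux ρ₁ ρ₂ M v φ μ t) := by unfold massFlux rhoAff; fun_prop
  have cq : ContDiff ℝ ∞ fun y => dot (v t y) (v t y) / 2 := by unfold dot; fun_prop
  unfold energyFlux
  rw [divg_sub (D (by fun_prop)) (D (by fun_prop)), divg_add (D (by fun_prop)) (D (by fun_prop)),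
    divg_sub (D (by fun_prop)) (D (by fun_prop)), divg_sub (D hσv) (D (by fun_prop)),
    divg_sum_smul_symGrad (D cv) fun i => D (cσ i), divg_smul (D' cp) (D cv),
    divg_half_dot_self_smul (D cv) (D cb), divg_smul (D' cφt) (D cgφ), divg_grad (D cgφ),
    divg_smul (D' cμ) (D cj), divg_massFlux (D' cφ) (D cv) (D cj),
    divg_diffusionFlux (D (by fun_prop)), diffusionFlux, dot_neg_right, dot_smul_right]
  simp only [divg_eq_sum_grad (D (cσ _)), grad, Pi.smul_apply, smul_eq_mul]
  ring

lemma deriv_energyDensity_add_dissipationDensity (hM : ContDiff ℝ ∞ M) (hη : ContDiff ℝ ∞ η)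
    (hF : ContDiff ℝ ∞ F) (hv : ContDiff ℝ ∞ fun q : ℝ × (Fin d → ℝ) => v q.1 q.2)
    (hp : ContDiff ℝ ∞ fun q : ℝ × (Fin d → ℝ) => p q.1 q.2)
    (hφ : ContDiff ℝ ∞ fun q : ℝ × (Fin d → ℝ) => φ q.1 q.2)
    (hμ : ContDiff ℝ ∞ fun q : ℝ × (Fin d → ℝ) => μ q.1 q.2)
    (hsol : IsStrongSolutionAt ρ₁ ρ₂ M η F v p φ μ t) :
    deriv (fun s => energyDensity ρ₁ ρ₂ F v φ s x) t + dissipationDensity M η v φ μ t x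
      = divg (energyFlux ρ₁ ρ₂ M η v p φ μ t) x := by
  have hmomv : rhoAff ρ₁ ρ₂ (φ t x) * dot (v t x) (fun i => deriv (fun s => v s x i) t)
      + dot (v t x) (jac (v t) x *ᵥ massFlux ρ₁ ρ₂ M v φ μ t x)
      - dot (v t x) (fun i =>
          ∑ k, fderiv ℝ (fun y => 2 * η (φ t y) * symGrad (v t) y i k) x (Pi.single k 1))
      + dot (v t x) (grad (p t) x) = μ t x * dot (v t x) (grad (φ t) x) := by
    simp only [dot, mulVec, dotProduct]
    rw [Finset.mul_sum, Finset.mul_sum, ← Finset.sum_add_distrib, ← Finset.sum_sub_distrib,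
      ← Finset.sum_add_distrib]
    refine Finset.sum_congr rfl fun i _ => ?_
    simp only [mul_comm (jac (v t) x i _)]
    linear_combination v t x i * hsol.momentum x i
  rw [(hasDerivAt_energyDensity (hF.differentiable (by simp)) hv hφ).deriv,
    divg_energyFlux hM hη hv hp hφ hμ, dissipationDensity, hsol.incompressible,
    dot_comm (grad (p t) x), dot_comm (grad (φ t) x) (v t x),
    dot_comm (grad (fun y => deriv (fun s => φ s y) t) x)]
  linear_combination hmomv
    + ((ρ₂ - ρ₁) / 2 * dot (v t x) (v t x) / 2 + μ t x) * hsol.phaseField x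
    - deriv (fun s => φ s x) t * hsol.chemicalPotential x

lemma integral_deriv_energyDensity (hM : ContDiff ℝ ∞ M) (hη : ContDiff ℝ ∞ η)
    (hF : ContDiff ℝ ∞ F) (hv : ContDiff ℝ ∞ fun q : ℝ × (Fin d → ℝ) => v q.1 q.2)
    (hp : ContDiff ℝ ∞ fun q : ℝ × (Fin d → ℝ) => p q.1 q.2)
    (hφ : ContDiff ℝ ∞ fun q : ℝ × (Fin d → ℝ) => φ q.1 q.2)
    (hμ : ContDiff ℝ ∞ fun q : ℝ × (Fin d → ℝ) => μ q.1 q.2) (hK : IsCompact K)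
    (hv0 : ∀ x ∉ K, v t x = 0) (hp0 : ∀ x ∉ K, p t x = 0) (hφ0 : ∀ x ∉ K, φ t x = 0)
    (hμ0 : ∀ x ∉ K, μ t x = 0) (hsol : IsStrongSolutionAt ρ₁ ρ₂ M η F v p φ μ t) :
    ∫ x, deriv (fun s => energyDensity ρ₁ ρ₂ F v φ s x) t
      = -∫ x, dissipationDensity M η v φ μ t x := by
  have hG : ContDiff ℝ 1 (energyFlux ρ₁ ρ₂ M η v p φ μ t) :=
    ((contDiff_energyFlux hM hη hv hp hφ hμ).uncurry_left t).of_le (by simp)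
  have hGc : HasCompactSupport (energyFlux ρ₁ ρ₂ M η v p φ μ t) :=
    HasCompactSupport.intro hK fun x hx => energyFlux_eq_zero hK.isClosed hv0 hp0 hφ0 hμ0 hx
  have hdis : Integrable (dissipationDensity M η v φ μ t) :=
    ((contDiff_dissipationDensity hM hη hv hφ hμ).uncurry_left t).continuous
      |>.integrable_of_hasCompactSupport
        (HasCompactSupport.intro hK fun x hx => dissipationDensity_eq_zero hK.isClosed hv0 hμ0 hx)
  simp_rw [eq_sub_of_add_eq (deriv_energyDensity_add_dissipationDensity hM hη hF hv hp hφ hμ hsol)]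
  rw [integral_sub (hG.integrable_divg hGc) hdis, integral_divg_eq_zero hG hGc, zero_sub]

lemma integral_energyDensity (hF : ContDiff ℝ ∞ F) (hF0 : F 0 = 0)
    (hv : ContDiff ℝ ∞ fun q : ℝ × (Fin d → ℝ) => v q.1 q.2)
    (hφ : ContDiff ℝ ∞ fun q : ℝ × (Fin d → ℝ) => φ q.1 q.2) (hK : IsCompact K)
    (hv0 : ∀ x ∉ K, v t x = 0) (hφ0 : ∀ x ∉ K, φ t x = 0) :
    ∫ x, energyDensity ρ₁ ρ₂ F v φ t x
      = (1/2) * (∫ x, rhoAff ρ₁ ρ₂ (φ t x) * dot (v t x) (v t x))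
        + (1/2) * (∫ x, dot (grad (φ t) x) (grad (φ t) x)) + ∫ x, F (φ t x) := by
  have cv : Continuous (v t) := (hv.uncurry_left t).continuous
  have cgφ : Continuous (grad (φ t)) :=
    ((hφ.uncurry_grad (m := 0) (by simp)).uncurry_left t).continuous
  have i₁ : Integrable fun x => rhoAff ρ₁ ρ₂ (φ t x) * dot (v t x) (v t x) :=
    (by unfold rhoAff dot; fun_prop : Continuous _).integrable_of_hasCompactSupport
      (HasCompactSupport.intro hK fun x hx => by simp [dot, hv0 x hx])
  have i₂ : Integrable fun x => dot (grad (φ t) x) (grad (φ t) x) :=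
    (by unfold dot; fun_prop : Continuous _).integrable_of_hasCompactSupport
      (HasCompactSupport.intro hK fun x hx => by
        simp [dot, grad_eq_zero_of_forall_notMem hK.isClosed hφ0 hx])
  have i₃ : Integrable fun x => F (φ t x) :=
    (by fun_prop : Continuous _).integrable_of_hasCompactSupport
      (HasCompactSupport.intro hK fun x hx => by simp [hφ0 x hx, hF0])
  simp only [energyDensity]
  rw [integral_add ((i₁.div_const 2).fun_add (i₂.div_const 2)) i₃, integral_add (i₁.div_const 2)
    (i₂.div_const 2), integral_div, integral_div]
  ring

lemma intervalIntegral_integral_dissipationDensity (hM : ContDiff ℝ ∞ M) (hη : ContDiff ℝ ∞ η)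
    (hv : ContDiff ℝ ∞ fun q : ℝ × (Fin d → ℝ) => v q.1 q.2)
    (hφ : ContDiff ℝ ∞ fun q : ℝ × (Fin d → ℝ) => φ q.1 q.2)
    (hμ : ContDiff ℝ ∞ fun q : ℝ × (Fin d → ℝ) => μ q.1 q.2) (hK : IsCompact K)
    (hv0 : ∀ t, ∀ x ∉ K, v t x = 0) (hμ0 : ∀ t, ∀ x ∉ K, μ t x = 0) (a b : ℝ) :
    ∫ t in a..b, ∫ x, dissipationDensity M η v φ μ t x
      = (∫ t in a..b, ∫ x, M (φ t x) * dot (grad (μ t) x) (grad (μ t) x))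
        + ∫ t in a..b, ∫ x, 2 * η (φ t x) * frob (symGrad (v t) x) (symGrad (v t) x) := by
  have cgμ : Continuous fun q : ℝ × (Fin d → ℝ) => grad (μ q.1) q.2 :=
    (hμ.uncurry_grad (m := 0) (by simp)).continuous
  have cS : ∀ i, Continuous fun q : ℝ × (Fin d → ℝ) => symGrad (v q.1) q.2 i := fun i =>
    (hv.uncurry_symGrad_apply (m := 0) (by simp) i).continuous
  refine intervalIntegral_integral_add (by unfold dot; fun_prop) (by unfold frob; fun_prop) hK
    (fun t x hx => ?_) (fun t x hx => ?_) a b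
  · simp [dot, grad_eq_zero_of_forall_notMem hK.isClosed (hμ0 t) hx]
  · simp [frob, symGrad_eq_zero_of_forall_notMem hK.isClosed (hv0 t) hx]

end Model

theorem energy_identity_general
    {d : ℕ} {T : ℝ} (hT : 0 < T)
    {ρ₁ ρ₂ : ℝ}
    (M η F : ℝ → ℝ)
    (hM : ContDiff ℝ (⊤ : ℕ∞) M) (hη : ContDiff ℝ (⊤ : ℕ∞) η)
    (hF : ContDiff ℝ (⊤ : ℕ∞) F)
    (hF0 : F 0 = 0)
    (v : ℝ → (Fin d → ℝ) → Fin d → ℝ) (p φ μ : ℝ → (Fin d → ℝ) → ℝ)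
    (hv : ContDiff ℝ (⊤ : ℕ∞) fun q : ℝ × (Fin d → ℝ) => v q.1 q.2)
    (hp : ContDiff ℝ (⊤ : ℕ∞) fun q : ℝ × (Fin d → ℝ) => p q.1 q.2)
    (hφ : ContDiff ℝ (⊤ : ℕ∞) fun q : ℝ × (Fin d → ℝ) => φ q.1 q.2)
    (hμ : ContDiff ℝ (⊤ : ℕ∞) fun q : ℝ × (Fin d → ℝ) => μ q.1 q.2)
    {K : Set (Fin d → ℝ)} (hK : IsCompact K)
    (hsupp : ∀ t, ∀ x ∉ K, v t x = 0 ∧ p t x = 0 ∧ φ t x = 0 ∧ μ t x = 0)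
    -- momentum equation: ρ(φ)∂ₜv + ((ρ(φ)v + ρ′ j)·∇)v − div(2η(φ)Dv) + ∇p = μ∇φ,
    -- where j = −M(φ)∇μ
    (hmom : ∀ t ∈ Ioo (0:ℝ) T, ∀ x, ∀ i,
      rhoAff ρ₁ ρ₂ (φ t x) * deriv (fun s => v s x i) t
        + (∑ k, (rhoAff ρ₁ ρ₂ (φ t x) * v t x k
            + (ρ₂ - ρ₁) / 2 * (-(M (φ t x) * grad (μ t) x k))) * jac (v t) x i k)
        - (∑ k, fderiv ℝ (fun y => 2 * η (φ t y) * symGrad (v t) y i k) x (Pi.single k 1))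
        + grad (p t) x i
      = μ t x * grad (φ t) x i)
    -- phase-field equation: ∂ₜφ + ⟨v,∇φ⟩ − div(M(φ)∇μ) = 0
    (hph : ∀ t ∈ Ioo (0:ℝ) T, ∀ x,
      deriv (fun s => φ s x) t + dot (v t x) (grad (φ t) x)
        - (∑ k, fderiv ℝ (fun y => M (φ t y) * grad (μ t) y k) x (Pi.single k 1)) = 0)
    -- chemical potential: μ = −Δφ + F′(φ)
    (hchem : ∀ t ∈ Ioo (0:ℝ) T, ∀ x, μ t x = - lap (φ t) x + deriv F (φ t x))
    -- incompressibility: div v = 0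
    (hdiv : ∀ t ∈ Ioo (0:ℝ) T, ∀ x, divg (v t) x = 0) :
    (1/2) * (∫ x, rhoAff ρ₁ ρ₂ (φ T x) * dot (v T x) (v T x))
      + (1/2) * (∫ x, dot (grad (φ T) x) (grad (φ T) x))
      + (∫ x, F (φ T x))
      + (∫ t in (0:ℝ)..T, ∫ x, M (φ t x) * dot (grad (μ t) x) (grad (μ t) x))
      + (∫ t in (0:ℝ)..T, ∫ x, 2 * η (φ t x) * frob (symGrad (v t) x) (symGrad (v t) x))
    = (1/2) * (∫ x, rhoAff ρ₁ ρ₂ (φ 0 x) * dot (v 0 x) (v 0 x))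
      + (1/2) * (∫ x, dot (grad (φ 0) x) (grad (φ 0) x))
      + (∫ x, F (φ 0 x)) := by
  have hv0 : ∀ t, ∀ x ∉ K, v t x = 0 := fun t x hx => (hsupp t x hx).1
  have hp0 : ∀ t, ∀ x ∉ K, p t x = 0 := fun t x hx => (hsupp t x hx).2.1
  have hφ0 : ∀ t, ∀ x ∉ K, φ t x = 0 := fun t x hx => (hsupp t x hx).2.2.1
  have hμ0 : ∀ t, ∀ x ∉ K, μ t x = 0 := fun t x hx => (hsupp t x hx).2.2.2
  have hbalance : ∫ t in (0:ℝ)..T, ∫ x, deriv (fun s => energyDensity ρ₁ ρ₂ F v φ s x) t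
      = ∫ t in (0:ℝ)..T, -∫ x, dissipationDensity M η v φ μ t x := by
    refine intervalIntegral.integral_congr_ae ?_
    filter_upwards [Measure.ae_ne volume T] with t htT ht
    rw [uIoc_of_le hT.le] at ht
    have ht' : t ∈ Ioo 0 T := ⟨ht.1, ht.2.lt_of_ne htT⟩
    exact integral_deriv_energyDensity hM hη hF hv hp hφ hμ hK (hv0 t) (hp0 t) (hφ0 t) (hμ0 t)
      ⟨hmom t ht', hph t ht', hchem t ht', hdiv t ht'⟩
  have hFTC := integral_sub_integral_eq_intervalIntegral_deriv (μ := volume)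
    ((contDiff_energyDensity (ρ₁ := ρ₁) (ρ₂ := ρ₂) hF hv hφ).of_le (by simp)) hK
    (fun t x hx => energyDensity_eq_zero hF0 hK.isClosed (hv0 t) (hφ0 t) hx) 0 T
  rw [hbalance, intervalIntegral.integral_neg,
    intervalIntegral_integral_dissipationDensity hM hη hv hφ hμ hK hv0 hμ0,
    integral_energyDensity hF hF0 hv hφ hK (hv0 T) (hφ0 T),
    integral_energyDensity hF hF0 hv hφ hK (hv0 0) (hφ0 0)] at hFTC
  linarith

/-- Energy identity for the diffuse-interface two-phase flow model of
Abels–Garcke–Grün (equation (2.1) in the paper). -/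
theorem energy_identity
    {d : ℕ} (hd : 1 ≤ d) {T : ℝ} (hT : 0 < T)
    {ρ₁ ρ₂ : ℝ} (hρ₁ : 0 < ρ₁) (hρ₂ : 0 < ρ₂)
    (M η F : ℝ → ℝ)
    (hM : ContDiff ℝ (⊤ : ℕ∞) M) (hη : ContDiff ℝ (⊤ : ℕ∞) η)
    (hF : ContDiff ℝ (⊤ : ℕ∞) F)
    (hMnn : ∀ s, 0 ≤ M s) (hηpos : ∀ s, 0 < η s)
    (hF0 : F 0 = 0) (hF'0 : deriv F 0 = 0)
    (v : ℝ → (Fin d → ℝ) → Fin d → ℝ) (p φ μ : ℝ → (Fin d → ℝ) → ℝ)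
    (hv : ContDiff ℝ (⊤ : ℕ∞) fun q : ℝ × (Fin d → ℝ) => v q.1 q.2)
    (hp : ContDiff ℝ (⊤ : ℕ∞) fun q : ℝ × (Fin d → ℝ) => p q.1 q.2)
    (hφ : ContDiff ℝ (⊤ : ℕ∞) fun q : ℝ × (Fin d → ℝ) => φ q.1 q.2)
    (hμ : ContDiff ℝ (⊤ : ℕ∞) fun q : ℝ × (Fin d → ℝ) => μ q.1 q.2)
    {K : Set (Fin d → ℝ)} (hK : IsCompact K)
    (hsupp : ∀ t, ∀ x ∉ K, v t x = 0 ∧ p t x = 0 ∧ φ t x = 0 ∧ μ t x = 0)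
    -- momentum equation: ρ(φ)∂ₜv + ((ρ(φ)v + ρ′ j)·∇)v − div(2η(φ)Dv) + ∇p = μ∇φ,
    -- where j = −M(φ)∇μ
    (hmom : ∀ t ∈ Ioo (0:ℝ) T, ∀ x, ∀ i,
      rhoAff ρ₁ ρ₂ (φ t x) * deriv (fun s => v s x i) t
        + (∑ k, (rhoAff ρ₁ ρ₂ (φ t x) * v t x k
            + (ρ₂ - ρ₁) / 2 * (-(M (φ t x) * grad (μ t) x k))) * jac (v t) x i k)
        - (∑ k, fderiv ℝ (fun y => 2 * η (φ t y) * symGrad (v t) y i k) x (Pi.single k 1))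
        + grad (p t) x i
      = μ t x * grad (φ t) x i)
    -- phase-field equation: ∂ₜφ + ⟨v,∇φ⟩ − div(M(φ)∇μ) = 0
    (hph : ∀ t ∈ Ioo (0:ℝ) T, ∀ x,
      deriv (fun s => φ s x) t + dot (v t x) (grad (φ t) x)
        - (∑ k, fderiv ℝ (fun y => M (φ t y) * grad (μ t) y k) x (Pi.single k 1)) = 0)
    -- chemical potential: μ = −Δφ + F′(φ)
    (hchem : ∀ t ∈ Ioo (0:ℝ) T, ∀ x, μ t x = - lap (φ t) x + deriv F (φ t x))
    -- incompressibility: div v = 0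
    (hdiv : ∀ t ∈ Ioo (0:ℝ) T, ∀ x, divg (v t) x = 0) :
    (1/2) * (∫ x, rhoAff ρ₁ ρ₂ (φ T x) * dot (v T x) (v T x))
      + (1/2) * (∫ x, dot (grad (φ T) x) (grad (φ T) x))
      + (∫ x, F (φ T x))
      + (∫ t in (0:ℝ)..T, ∫ x, M (φ t x) * dot (grad (μ t) x) (grad (μ t) x))
      + (∫ t in (0:ℝ)..T, ∫ x, 2 * η (φ t x) * frob (symGrad (v t) x) (symGrad (v t) x))
    = (1/2) * (∫ x, rhoAff ρ₁ ρ₂ (φ 0 x) * dot (v 0 x) (v 0 x))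
      + (1/2) * (∫ x, dot (grad (φ 0) x) (grad (φ 0) x))
      + (∫ x, F (φ 0 x)) :=
  energy_identity_general hT M η F hM hη hF hF0 v p φ μ hv hp hφ hμ hK hsupp hmom hph hchem hdiv
end
end

section
/- Let d ≥ 1. Suppose v : ℝ^d × (0,T) → ℝ^d and φ, μ : ℝ^d × (0,T) → ℝ are smooth, supported for every t in a fixed compact set K ⊂ ℝ^d, and satisfy pointwise ∂ₜφ + ⟨v,∇φ⟩ − div(M(φ)∇μ) = 0 and μ = −Δφ + F′(φ). Then for every t ∈ (0,T): (1/2) d/dt ∫_{ℝ^d} |∇φ|² + d/dt ∫_{ℝ^d} F(φ) + ∫_{ℝ^d} M(φ)|∇μ|² = −∫_{ℝ^d} μ⟨v,∇φ⟩. -/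
open MeasureTheory Set Matrix

noncomputable section

/-!
Write `∂ₜφ` for the time derivative. All integrands are `C¹` in `(t, x)` and supported in `K`,
so we may differentiate under the integral sign: by the symmetry of mixed partials
`d/dt ½∫|∇φ|² = ∫⟨∇∂ₜφ, ∇φ⟩ = -∫ Δφ ∂ₜφ`, and `d/dt ∫F(φ) = ∫F′(φ) ∂ₜφ`. Their sum is therefore
`∫ μ ∂ₜφ` by the chemical-potential equation. Substituting `∂ₜφ = div(M(φ)∇μ) − ⟨v,∇φ⟩` from the
phase-field equation and integrating by parts once more gives
`∫ μ ∂ₜφ = -∫ M(φ)|∇μ|² − ∫ μ⟨v,∇φ⟩`.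
-/

open Function

section Slices

variable {E : Type*} [NormedAddCommGroup E] [NormedSpace ℝ E]

lemma fderiv_slice_apply {f : ℝ → E → ℝ} {t : ℝ} {x : E}
    (hf : DifferentiableAt ℝ (uncurry f) (t, x)) (w : E) :
    fderiv ℝ (f t) x w = fderiv ℝ (uncurry f) (t, x) (0, w) := by
  rw [show f t = uncurry f ∘ fun y => (t, y) from rfl,
    (hf.hasFDerivAt.comp x (hasFDerivAt_prodMk_right t x)).fderiv]
  rfl

lemma hasDerivAt_slice {f : ℝ → E → ℝ} {t : ℝ} {x : E}
    (hf : DifferentiableAt ℝ (uncurry f) (t, x)) :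
    HasDerivAt (fun s => f s x) (fderiv ℝ (uncurry f) (t, x) (1, 0)) t := by
  have := (hf.hasFDerivAt.comp t (hasFDerivAt_prodMk_left t x)).hasDerivAt
  simp only [ContinuousLinearMap.comp_apply, ContinuousLinearMap.inl_apply] at this
  exact this

lemma contDiff_slice {G : Type*} [NormedAddCommGroup G] [NormedSpace ℝ G] {n : WithTop ℕ∞}
    {f : ℝ → E → G} (hf : ContDiff ℝ n (uncurry f)) (t : ℝ) : ContDiff ℝ n (f t) :=
  hf.comp (contDiff_prodMk_right t)

lemma contDiff_deriv_slice {m n : WithTop ℕ∞} {f : ℝ → E → ℝ}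
    (hf : ContDiff ℝ n (uncurry f)) (hmn : m + 1 ≤ n) (t : ℝ) :
    ContDiff ℝ m fun x => deriv (fun s => f s x) t := by
  have hd : Differentiable ℝ (uncurry f) :=
    hf.differentiable (ne_bot_of_le_ne_bot (by simp) hmn)
  simp_rw [fun x => (hasDerivAt_slice (hd (t, x))).deriv]
  exact ((hf.fderiv_right hmn).clm_apply contDiff_const).comp (contDiff_prodMk_right t)

lemma contDiff_uncurry_fderiv_slice_apply {m n : WithTop ℕ∞} {f : ℝ → E → ℝ}
    (hf : ContDiff ℝ n (uncurry f)) (hmn : m + 1 ≤ n) (w : E) :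
    ContDiff ℝ m (uncurry fun s x => fderiv ℝ (f s) x w) := by
  have hd : Differentiable ℝ (uncurry f) :=
    hf.differentiable (ne_bot_of_le_ne_bot (by simp) hmn)
  have h : (uncurry fun s x => fderiv ℝ (f s) x w) = fun q => fderiv ℝ (uncurry f) q (0, w) :=
    funext fun q => fderiv_slice_apply (hd q) w
  rw [h]
  exact (hf.fderiv_right hmn).clm_apply contDiff_const

lemma fderiv_fderiv_apply_comm {g : E → ℝ} (hg : ContDiff ℝ 2 g) (q u w : E) :
    fderiv ℝ (fun p => fderiv ℝ g p u) q w = fderiv ℝ (fun p => fderiv ℝ g p w) q u := by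
  have hd' : DifferentiableAt ℝ (fderiv ℝ g) q :=
    (hg.fderiv_right (m := 1) (by norm_num)).differentiable (by simp) q
  rw [fderiv_clm_apply hd' (differentiableAt_const u),
    fderiv_clm_apply hd' (differentiableAt_const w)]
  simpa using (hg.contDiffAt.isSymmSndFDerivAt (by simp)).eq w u

lemma hasDerivAt_fderiv_slice_apply {f : ℝ → E → ℝ} (hf : ContDiff ℝ 2 (uncurry f))
    (t : ℝ) (x w : E) :
    HasDerivAt (fun s => fderiv ℝ (f s) x w)
      (fderiv ℝ (fun y => deriv (fun s => f s y) t) x w) t := by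
  have hd : Differentiable ℝ (uncurry f) := hf.differentiable (by simp)
  have hd' (u : ℝ × E) : Differentiable ℝ fun q => fderiv ℝ (uncurry f) q u :=
    ((hf.fderiv_right (m := 1) (by norm_num)).clm_apply contDiff_const).differentiable (by simp)
  have hdt := hasDerivAt_slice (f := fun s y => fderiv ℝ (uncurry f) (s, y) (0, w))
    (hd' _ (t, x))
  have hdx := fderiv_slice_apply (f := fun s y => fderiv ℝ (uncurry f) (s, y) (1, 0))
    (hd' _ (t, x)) w
  simp_rw [fderiv_slice_apply (hd _), fun y => (hasDerivAt_slice (hd (t, y))).deriv, hdx]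
  convert hdt using 1
  exact fderiv_fderiv_apply_comm hf (t, x) (1, 0) (0, w)

end Slices

section CompactSupport

variable {X : Type*} [TopologicalSpace X] [MeasurableSpace X] [OpensMeasurableSpace X]
  {ν : Measure X} [IsFiniteMeasureOnCompacts ν]

lemma integrable_mul_of_hasCompactSupport_left {f g : X → ℝ}
    (hf : Continuous f) (hg : Continuous g) (hfc : HasCompactSupport f) :
    Integrable (fun x => f x * g x) ν :=
  (hf.mul hg).integrable_of_hasCompactSupport hfc.mul_right

lemma integrable_mul_of_hasCompactSupport_right {f g : X → ℝ}
    (hf : Continuous f) (hg : Continuous g) (hgc : HasCompactSupport g) :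
    Integrable (fun x => f x * g x) ν :=
  (hf.mul hg).integrable_of_hasCompactSupport hgc.mul_left

end CompactSupport

section Integrals

variable {E : Type*} [NormedAddCommGroup E] [NormedSpace ℝ E] [MeasurableSpace E] [BorelSpace E]
  {ν : Measure E}

lemma hasDerivAt_integral_of_contDiff [IsFiniteMeasureOnCompacts ν] {H : ℝ → E → ℝ}
    (hH : ContDiff ℝ 1 (uncurry H)) {K : Set E} (hK : IsCompact K)
    (h0 : ∀ s, ∀ x ∉ K, H s x = 0) (t : ℝ) :
    HasDerivAt (fun s => ∫ x, H s x ∂ν) (∫ x, deriv (fun s => H s x) t ∂ν) t := by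
  have hd : Differentiable ℝ (uncurry H) := hH.differentiable one_ne_zero
  have hderiv (s : ℝ) (x : E) :
      HasDerivAt (fun s => H s x) (deriv (fun s => H s x) s) s :=
    (hasDerivAt_slice (hd (s, x))).differentiableAt.hasDerivAt
  have hcont : Continuous fun q : ℝ × E => deriv (fun s => H s q.2) q.1 := by
    simp_rw [fun q : ℝ × E => (hasDerivAt_slice (hd q)).deriv]
    exact (hH.continuous_fderiv one_ne_zero).clm_apply continuous_const
  have hzero (s : ℝ) {x : E} (hx : x ∉ K) : deriv (fun s => H s x) s = 0 := by
    simp [h0 _ x hx]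
  obtain ⟨C, hC⟩ := ((isCompact_closedBall t 1).prod hK).exists_bound_of_continuousOn
    hcont.continuousOn
  have hbound : ∀ x, ∀ s ∈ Metric.ball t 1,
      ‖deriv (fun s => H s x) s‖ ≤ K.indicator (fun _ => C) x := by
    intro x s hs
    by_cases hx : x ∈ K
    · rw [indicator_of_mem hx]
      exact hC (s, x) ⟨Metric.ball_subset_closedBall hs, hx⟩
    · rw [indicator_of_notMem hx, hzero s hx, norm_zero]
  exact (hasDerivAt_integral_of_dominated_loc_of_deriv_le (Metric.ball_mem_nhds t one_pos)
    (Filter.Eventually.of_forall fun s => (contDiff_slice hH s).continuous.aestronglyMeasurable)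
    ((contDiff_slice hH t).continuous.integrable_of_hasCompactSupport
      (HasCompactSupport.intro hK (h0 t)))
    (hcont.comp (continuous_const.prodMk continuous_id)).aestronglyMeasurable
    (Filter.Eventually.of_forall hbound)
    ((integrable_indicator_iff hK.measurableSet).2 (integrableOn_const hK.measure_lt_top.ne))
    (Filter.Eventually.of_forall fun x s _ => hderiv s x)).2

lemma hasDerivAt_integral_comp [IsFiniteMeasureOnCompacts ν] {F : ℝ → ℝ}
    (hF : ContDiff ℝ 1 F) (hF0 : F 0 = 0) {φ : ℝ → E → ℝ} (hφ : ContDiff ℝ 1 (uncurry φ))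
    {K : Set E} (hK : IsCompact K) (h0 : ∀ s, ∀ x ∉ K, φ s x = 0) (t : ℝ) :
    HasDerivAt (fun s => ∫ x, F (φ s x) ∂ν)
      (∫ x, deriv F (φ t x) * deriv (fun s => φ s x) t ∂ν) t := by
  have hφd : Differentiable ℝ (uncurry φ) := hφ.differentiable one_ne_zero
  have hchain (x : E) :
      deriv (fun s => F (φ s x)) t = deriv F (φ t x) * deriv (fun s => φ s x) t :=
    ((hF.differentiable one_ne_zero _).hasDerivAt.comp t
      (hasDerivAt_slice (hφd (t, x))).differentiableAt.hasDerivAt).deriv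
  simp_rw [← hchain]
  exact hasDerivAt_integral_of_contDiff (H := fun s x => F (φ s x)) (hF.comp hφ) hK
    (fun s x hx => by rw [h0 s x hx, hF0]) t

lemma integral_mul_fderiv_eq_neg_of_hasCompactSupport [FiniteDimensional ℝ E]
    [ν.IsAddHaarMeasure] {f g : E → ℝ} (hf : ContDiff ℝ 1 f) (hg : ContDiff ℝ 1 g)
    (hfc : HasCompactSupport f) (w : E) :
    ∫ x, f x * fderiv ℝ g x w ∂ν = -∫ x, fderiv ℝ f x w * g x ∂ν := by
  have hf' : Continuous fun x => fderiv ℝ f x w :=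
    (hf.continuous_fderiv one_ne_zero).clm_apply continuous_const
  have hg' : Continuous fun x => fderiv ℝ g x w :=
    (hg.continuous_fderiv one_ne_zero).clm_apply continuous_const
  exact integral_mul_fderiv_eq_neg_fderiv_mul_of_integrable
    (integrable_mul_of_hasCompactSupport_left hf' hg.continuous (hfc.fderiv_apply ℝ w))
    (integrable_mul_of_hasCompactSupport_left hf.continuous hg' hfc)
    (integrable_mul_of_hasCompactSupport_left hf.continuous hg.continuous hfc)
    (fun x _ => hf.differentiable one_ne_zero x) (fun x _ => hg.differentiable one_ne_zero x)

end Integrals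

section Euclidean

variable {d : ℕ}

lemma contDiff_grad_apply {m n : WithTop ℕ∞} {f : (Fin d → ℝ) → ℝ} (hf : ContDiff ℝ n f)
    (hmn : m + 1 ≤ n) (i : Fin d) : ContDiff ℝ m fun x => grad f x i :=
  (hf.fderiv_right hmn).clm_apply contDiff_const

lemma continuous_lap {f : (Fin d → ℝ) → ℝ} (hf : ContDiff ℝ 2 f) : Continuous (lap f) :=
  continuous_finsetSum _ fun i _ =>
    (contDiff_grad_apply (contDiff_grad_apply hf (m := 1) (by norm_num) i) (m := 0)
      (by norm_num) i).continuous

lemma continuous_dot {X : Type*} [TopologicalSpace X] {a b : X → Fin d → ℝ}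
    (ha : Continuous a) (hb : Continuous b) : Continuous fun x => dot (a x) (b x) :=
  continuous_finsetSum _ fun i _ =>
    ((continuous_apply i).comp ha).mul ((continuous_apply i).comp hb)

lemma dot_mul_right (a b : Fin d → ℝ) (c : ℝ) : dot a (fun k => c * b k) = c * dot a b := by
  simp only [dot, Finset.mul_sum]
  exact Finset.sum_congr rfl fun k _ => by ring

lemma grad_eq_zero_of_notMem {f : (Fin d → ℝ) → ℝ} {K : Set (Fin d → ℝ)} (hK : IsClosed K)
    (h0 : ∀ x ∉ K, f x = 0) {x : Fin d → ℝ} (hx : x ∉ K) : grad f x = 0 := by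
  have : fderiv ℝ f x = 0 :=
    fderiv_of_notMem_tsupport ℝ fun h => hx (closure_minimal (support_subset_iff'.2 h0) hK h)
  ext i
  simp [grad, this]

variable {ν : Measure (Fin d → ℝ)} [ν.IsAddHaarMeasure]

lemma integral_mul_sum_fderiv_eq_neg_integral_dot_grad {f : (Fin d → ℝ) → ℝ}
    {A : Fin d → (Fin d → ℝ) → ℝ} (hf : ContDiff ℝ 1 f) (hfc : HasCompactSupport f)
    (hA : ∀ k, ContDiff ℝ 1 (A k)) :
    ∫ x, f x * ∑ k, fderiv ℝ (A k) x (Pi.single k 1) ∂ν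
      = -∫ x, dot (grad f x) (fun k => A k x) ∂ν := by
  have hA' (k : Fin d) : Continuous fun x => fderiv ℝ (A k) x (Pi.single k 1) :=
    ((hA k).continuous_fderiv one_ne_zero).clm_apply continuous_const
  have hf' (k : Fin d) : Continuous fun x => grad f x k :=
    (contDiff_grad_apply hf (m := 0) (by norm_num) k).continuous
  simp_rw [Finset.mul_sum]
  rw [integral_finsetSum _ fun k _ =>
    integrable_mul_of_hasCompactSupport_left hf.continuous (hA' k) hfc]
  simp_rw [integral_mul_fderiv_eq_neg_of_hasCompactSupport hf (hA _) hfc, dot,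
    Finset.sum_neg_distrib]
  rw [integral_finsetSum _ fun k _ =>
    integrable_mul_of_hasCompactSupport_left (hf' k) (hA k).continuous (hfc.fderiv_apply ℝ _)]
  rfl

lemma integral_mul_lap_eq_neg_integral_dot_grad {f g : (Fin d → ℝ) → ℝ} (hf : ContDiff ℝ 1 f)
    (hfc : HasCompactSupport f) (hg : ContDiff ℝ 2 g) :
    ∫ x, f x * lap g x ∂ν = -∫ x, dot (grad f x) (grad g x) ∂ν :=
  integral_mul_sum_fderiv_eq_neg_integral_dot_grad hf hfc fun k =>
    contDiff_grad_apply hg (by norm_num) k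

lemma hasDerivAt_integral_dot_grad_self {φ : ℝ → (Fin d → ℝ) → ℝ}
    (hφ : ContDiff ℝ 2 (uncurry φ)) {K : Set (Fin d → ℝ)} (hK : IsCompact K)
    (h0 : ∀ s, ∀ x ∉ K, φ s x = 0) (t : ℝ) :
    HasDerivAt (fun s => ∫ x, dot (grad (φ s) x) (grad (φ s) x) ∂ν)
      (2 * ∫ x, dot (grad (fun y => deriv (fun s => φ s y) t) x) (grad (φ t) x) ∂ν) t := by
  have hgrad (i : Fin d) : ContDiff ℝ 1 (uncurry fun s x => grad (φ s) x i) :=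
    contDiff_uncurry_fderiv_slice_apply hφ (by norm_num) _
  have hH : ContDiff ℝ 1 (uncurry fun s x => dot (grad (φ s) x) (grad (φ s) x)) := by
    have := ContDiff.sum (s := Finset.univ) fun i _ => (hgrad i).mul (hgrad i)
    exact this
  have hH0 (s : ℝ) (x : Fin d → ℝ) (hx : x ∉ K) : dot (grad (φ s) x) (grad (φ s) x) = 0 := by
    simp [dot, grad_eq_zero_of_notMem hK.isClosed (h0 s) hx]
  have hpt (x : Fin d → ℝ) : deriv (fun s => dot (grad (φ s) x) (grad (φ s) x)) t
      = 2 * dot (grad (fun y => deriv (fun s => φ s y) t) x) (grad (φ t) x) := by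
    have h (i : Fin d) := hasDerivAt_fderiv_slice_apply hφ t x (Pi.single i 1)
    calc deriv (fun s => dot (grad (φ s) x) (grad (φ s) x)) t
        = ∑ i, (fderiv ℝ (fun y => deriv (fun s => φ s y) t) x (Pi.single i 1) * grad (φ t) x i
            + grad (φ t) x i * fderiv ℝ (fun y => deriv (fun s => φ s y) t) x (Pi.single i 1)) :=
          (HasDerivAt.fun_sum (u := Finset.univ) fun i _ => (h i).mul (h i)).deriv
      _ = _ := by
          simp only [dot, grad, Finset.mul_sum]
          exact Finset.sum_congr rfl fun i _ => by ring
  rw [← integral_const_mul]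
  simp_rw [← hpt]
  exact hasDerivAt_integral_of_contDiff hH hK hH0 t

lemma integral_mul_of_eq_neg_lap_add_deriv {F : ℝ → ℝ} {g w μ : (Fin d → ℝ) → ℝ}
    (hF : ContDiff ℝ 1 F) (hg : ContDiff ℝ 2 g) (hw : ContDiff ℝ 1 w) (hwc : HasCompactSupport w)
    (hμ : ∀ x, μ x = -lap g x + deriv F (g x)) :
    ∫ x, μ x * w x ∂ν = (∫ x, dot (grad w x) (grad g x) ∂ν) + ∫ x, deriv F (g x) * w x ∂ν := by
  have hpt (x : Fin d → ℝ) : μ x * w x = deriv F (g x) * w x - w x * lap g x := by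
    rw [hμ x]; ring
  have hI₁ : Integrable (fun x => deriv F (g x) * w x) ν :=
    integrable_mul_of_hasCompactSupport_right
      ((hF.continuous_deriv le_rfl).comp hg.continuous) hw.continuous hwc
  have hI₂ : Integrable (fun x => w x * lap g x) ν :=
    integrable_mul_of_hasCompactSupport_left hw.continuous (continuous_lap hg) hwc
  simp_rw [hpt]
  rw [integral_sub hI₁ hI₂, integral_mul_lap_eq_neg_integral_dot_grad hw hwc hg]
  ring

lemma integral_mul_of_eq_div_sub_dot {M : ℝ → ℝ} {g w μ : (Fin d → ℝ) → ℝ}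
    {V : (Fin d → ℝ) → Fin d → ℝ} (hM : ContDiff ℝ 1 M) (hg : ContDiff ℝ 1 g)
    (hμ : ContDiff ℝ 2 μ) (hμc : HasCompactSupport μ) (hV : Continuous V)
    (hw : ∀ x, w x = ∑ k, fderiv ℝ (fun y => M (g y) * grad μ y k) x (Pi.single k 1)
      - dot (V x) (grad g x)) :
    ∫ x, μ x * w x ∂ν
      = -(∫ x, M (g x) * dot (grad μ x) (grad μ x) ∂ν) - ∫ x, μ x * dot (V x) (grad g x) ∂ν := by
  have hflux (k : Fin d) : ContDiff ℝ 1 fun y => M (g y) * grad μ y k :=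
    (hM.comp hg).mul (contDiff_grad_apply hμ (by norm_num) k)
  have hI₁ : Integrable (fun x =>
      μ x * ∑ k, fderiv ℝ (fun y => M (g y) * grad μ y k) x (Pi.single k 1)) ν :=
    integrable_mul_of_hasCompactSupport_left hμ.continuous
      (continuous_finsetSum _ fun k _ =>
        (contDiff_grad_apply (hflux k) (m := 0) (by norm_num) k).continuous) hμc
  have hI₂ : Integrable (fun x => μ x * dot (V x) (grad g x)) ν :=
    integrable_mul_of_hasCompactSupport_left hμ.continuous
      (continuous_dot hV (continuous_pi fun i =>
        (contDiff_grad_apply hg (m := 0) (by norm_num) i).continuous)) hμc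
  simp_rw [hw, mul_sub]
  rw [integral_sub hI₁ hI₂,
    integral_mul_sum_fderiv_eq_neg_integral_dot_grad (hμ.of_le one_le_two) hμc hflux]
  simp_rw [dot_mul_right]

end Euclidean

theorem phasefield_tested_with_mu_general
    {d : ℕ} {T : ℝ}
    (M F : ℝ → ℝ)
    (hM : ContDiff ℝ (⊤ : ℕ∞) M) (hF : ContDiff ℝ (⊤ : ℕ∞) F)
    (hF0 : F 0 = 0)
    (v : ℝ → (Fin d → ℝ) → Fin d → ℝ) (φ μ : ℝ → (Fin d → ℝ) → ℝ)
    (hv : ContDiff ℝ (⊤ : ℕ∞) fun q : ℝ × (Fin d → ℝ) => v q.1 q.2)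
    (hφ : ContDiff ℝ (⊤ : ℕ∞) fun q : ℝ × (Fin d → ℝ) => φ q.1 q.2)
    (hμ : ContDiff ℝ (⊤ : ℕ∞) fun q : ℝ × (Fin d → ℝ) => μ q.1 q.2)
    {K : Set (Fin d → ℝ)} (hK : IsCompact K)
    (hsupp : ∀ t, ∀ x ∉ K, v t x = 0 ∧ φ t x = 0 ∧ μ t x = 0)
    -- phase-field equation: ∂ₜφ + ⟨v,∇φ⟩ − div(M(φ)∇μ) = 0
    (hph : ∀ t ∈ Ioo (0:ℝ) T, ∀ x,
      deriv (fun s => φ s x) t + dot (v t x) (grad (φ t) x)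
        - (∑ k, fderiv ℝ (fun y => M (φ t y) * grad (μ t) y k) x (Pi.single k 1)) = 0)
    -- chemical potential: μ = −Δφ + F′(φ)
    (hchem : ∀ t ∈ Ioo (0:ℝ) T, ∀ x, μ t x = - lap (φ t) x + deriv F (φ t x)) :
    ∀ t ∈ Ioo (0:ℝ) T,
      (1/2) * deriv (fun s => ∫ x, dot (grad (φ s) x) (grad (φ s) x)) t
        + deriv (fun s => ∫ x, F (φ s x)) t
        + (∫ x, M (φ t x) * dot (grad (μ t) x) (grad (μ t) x))
      = -∫ x, μ t x * dot (v t x) (grad (φ t) x) := by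
  intro t ht
  have h2 : (2 : WithTop ℕ∞) ≤ (⊤ : ℕ∞) := WithTop.coe_le_coe.mpr le_top
  have h1 : (1 : WithTop ℕ∞) ≤ (⊤ : ℕ∞) := one_le_two.trans h2
  have hφ2 : ContDiff ℝ 2 (uncurry φ) := hφ.of_le h2
  have hφt : ContDiff ℝ 2 (φ t) := contDiff_slice hφ2 t
  have hφ0 (s : ℝ) : ∀ x ∉ K, φ s x = 0 := fun x hx => (hsupp s x hx).2.1
  have hφ' : ContDiff ℝ 1 fun x => deriv (fun s => φ s x) t :=
    contDiff_deriv_slice hφ2 (by norm_num) t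
  have hφ'c : HasCompactSupport fun x => deriv (fun s => φ s x) t :=
    HasCompactSupport.intro hK fun x hx => by simp [hφ0 _ x hx]
  have hchem_tested := integral_mul_of_eq_neg_lap_add_deriv (ν := volume) (hF.of_le h1) hφt
    hφ' hφ'c (hchem t ht)
  have hphase_tested := integral_mul_of_eq_div_sub_dot (ν := volume) (hM.of_le h1)
    (hφt.of_le one_le_two) (contDiff_slice (hμ.of_le h2) t)
    (HasCompactSupport.intro hK fun x hx => (hsupp t x hx).2.2) (contDiff_slice hv t).continuous
    fun x => eq_sub_of_add_eq (sub_eq_zero.1 (hph t ht x))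
  rw [(hasDerivAt_integral_dot_grad_self hφ2 hK hφ0 t).deriv,
    (hasDerivAt_integral_comp (hF.of_le h1) hF0 (hφ2.of_le one_le_two) hK hφ0 t).deriv]
  linarith

/-- Identity (2.2b): testing the phase-field equation with `μ` and the
chemical-potential equation with `∂ₜφ`. -/
theorem phasefield_tested_with_mu
    {d : ℕ} (hd : 1 ≤ d) {T : ℝ} (hT : 0 < T)
    (M F : ℝ → ℝ)
    (hM : ContDiff ℝ (⊤ : ℕ∞) M) (hF : ContDiff ℝ (⊤ : ℕ∞) F)
    (hMnn : ∀ s, 0 ≤ M s) (hF0 : F 0 = 0) (hF'0 : deriv F 0 = 0)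
    (v : ℝ → (Fin d → ℝ) → Fin d → ℝ) (φ μ : ℝ → (Fin d → ℝ) → ℝ)
    (hv : ContDiff ℝ (⊤ : ℕ∞) fun q : ℝ × (Fin d → ℝ) => v q.1 q.2)
    (hφ : ContDiff ℝ (⊤ : ℕ∞) fun q : ℝ × (Fin d → ℝ) => φ q.1 q.2)
    (hμ : ContDiff ℝ (⊤ : ℕ∞) fun q : ℝ × (Fin d → ℝ) => μ q.1 q.2)
    {K : Set (Fin d → ℝ)} (hK : IsCompact K)
    (hsupp : ∀ t, ∀ x ∉ K, v t x = 0 ∧ φ t x = 0 ∧ μ t x = 0)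
    -- phase-field equation: ∂ₜφ + ⟨v,∇φ⟩ − div(M(φ)∇μ) = 0
    (hph : ∀ t ∈ Ioo (0:ℝ) T, ∀ x,
      deriv (fun s => φ s x) t + dot (v t x) (grad (φ t) x)
        - (∑ k, fderiv ℝ (fun y => M (φ t y) * grad (μ t) y k) x (Pi.single k 1)) = 0)
    -- chemical potential: μ = −Δφ + F′(φ)
    (hchem : ∀ t ∈ Ioo (0:ℝ) T, ∀ x, μ t x = - lap (φ t) x + deriv F (φ t x)) :
    ∀ t ∈ Ioo (0:ℝ) T,
      (1/2) * deriv (fun s => ∫ x, dot (grad (φ s) x) (grad (φ s) x)) t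
        + deriv (fun s => ∫ x, F (φ s x)) t
        + (∫ x, M (φ t x) * dot (grad (μ t) x) (grad (μ t) x))
      = -∫ x, μ t x * dot (v t x) (grad (φ t) x) :=
  phasefield_tested_with_mu_general M F hM hF hF0 v φ μ hv hφ hμ hK hsupp hph hchem
end
end
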